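/- arXiv:2409.13963 — 2 statements merged into one kernel-verified Lean document; each statement's English description precedes it below -/
import Mathlib

section
/- Let G₁, G₂ : L²([0,1]^D) → L²([0,1]^D) be covariance (integral) operators with continuous kernels g₁, g₂ that are real analytic on [0,1]^{2D}, and let B₁, B₂ be covariance operators with continuous kernels b₁, b₂ that are δ₁- and δ₂-banded respectively, with all bandwidth components less than 1. If G₁ + B₁ = G₂ + B₂, then G₁ = G₂ and B₁ = B₂. -/
open MeasureTheory Set Filter Topology

/-!
Testing `G₁ + B₁ = G₂ + B₂` against the continuous function `g₁ + b₁ - g₂ - b₂` shows that the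
kernels agree: `g₁ + b₁ = g₂ + b₂` on `[0,1]^D × [0,1]^D`. Near a point `(s₁, s₂)` of the open cube
with `s₁ d - s₂ d` larger than both bandwidths, both banded kernels vanish, so `g₁ = g₂` there;
the identity principle on the connected set `[0,1]^D × [0,1]^D` gives `g₁ = g₂` everywhere, and
then `b₁ = b₂`.
-/

theorem pi_Icc_subset_closure_interior {ι : Type*} [Finite ι] {a b : ι → ℝ}
    (hab : ∀ i, a i < b i) :
    (univ.pi fun i => Icc (a i) (b i)) ⊆ closure (interior (univ.pi fun i => Icc (a i) (b i))) := by
  rw [interior_pi_set finite_univ, closure_pi_set]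
  simp [closure_Ioo (hab _).ne]

section KernelDetermination

variable {X : Type*} [TopologicalSpace X] [T2Space X] [MeasurableSpace X] [OpensMeasurableSpace X]
  {μ : Measure X} [μ.IsOpenPosMeasure] [IsFiniteMeasureOnCompacts μ] {s : Set X}

theorem eqOn_of_forall_setIntegral_mul_eq (hs : IsCompact s) (hs' : s ⊆ closure (interior s))
    {k₁ k₂ : X → ℝ} (hk₁ : ContinuousOn k₁ s) (hk₂ : ContinuousOn k₂ s)
    (h : ∀ f : X → ℝ, ContinuousOn f s → ∫ x in s, k₁ x * f x ∂μ = ∫ x in s, k₂ x * f x ∂μ) :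
    EqOn k₁ k₂ s := by
  set f := k₁ - k₂
  have hf : ContinuousOn f s := hk₁.sub hk₂
  have hsq : ∫ x in s, f x * f x ∂μ = 0 := by
    have hsplit : (fun x => f x * f x) = fun x => k₁ x * f x - k₂ x * f x := by
      ext x; simp only [f, Pi.sub_apply]; ring
    have hint₁ : IntegrableOn (fun x => k₁ x * f x) s μ := (hk₁.mul hf).integrableOn_compact hs
    have hint₂ : IntegrableOn (fun x => k₂ x * f x) s μ := (hk₂.mul hf).integrableOn_compact hs
    rw [hsplit, integral_sub hint₁ hint₂, h f hf, sub_self]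
  have hae : (fun x => f x * f x) =ᵐ[μ.restrict s] 0 :=
    (integral_eq_zero_iff_of_nonneg (fun x => mul_self_nonneg (f x))
      ((hf.mul hf).integrableOn_compact hs)).1 hsq
  have hsq_zero : EqOn (fun x => f x * f x) 0 s :=
    Measure.eqOn_of_ae_eq hae (hf.mul hf) continuousOn_const hs'
  exact fun x hx => sub_eq_zero.1 (mul_self_eq_zero.1 (hsq_zero hx))

theorem kernel_eqOn_of_forall_setIntegral_mul_eq (hs : IsCompact s)
    (hs' : s ⊆ closure (interior s)) {K₁ K₂ : X × X → ℝ} (hK₁ : ContinuousOn K₁ (s ×ˢ s))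
    (hK₂ : ContinuousOn K₂ (s ×ˢ s))
    (h : ∀ f : X → ℝ, ContinuousOn f s → ∀ x ∈ s,
      ∫ y in s, K₁ (x, y) * f y ∂μ = ∫ y in s, K₂ (x, y) * f y ∂μ) :
    EqOn K₁ K₂ (s ×ˢ s) := by
  rintro ⟨x, y⟩ ⟨hx, hy⟩
  have hsection : MapsTo (fun y => (x, y)) s (s ×ˢ s) := fun y hy => ⟨hx, hy⟩
  exact eqOn_of_forall_setIntegral_mul_eq (μ := μ) hs hs'
    (hK₁.comp (Continuous.prodMk_right x).continuousOn hsection)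
    (hK₂.comp (Continuous.prodMk_right x).continuousOn hsection) (fun f hf => h f hf x hx) hy

end KernelDetermination

theorem exists_eventually_mem_unitCube_and_lt_abs_sub {ι : Type*} [Finite ι] (i₀ : ι) {δ : ℝ}
    (hδ₀ : 0 ≤ δ) (hδ₁ : δ < 1) :
    ∃ z₀ : (ι → ℝ) × (ι → ℝ), ∀ᶠ p in 𝓝 z₀,
      p ∈ (univ.pi fun _ => Icc (0 : ℝ) 1) ×ˢ (univ.pi fun _ => Icc (0 : ℝ) 1) ∧
        δ < |p.1 i₀ - p.2 i₀| := by
  set c := (1 - δ) / 4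
  have hc₀ : 0 < c := by positivity
  have hc₁ : c ≤ 1 / 4 := by simp only [c]; linarith
  set U : Set (ι → ℝ) := univ.pi fun _ => Ioo 0 1
  have hU : IsOpen U := isOpen_set_pi finite_univ fun _ _ => isOpen_Ioo
  have hgap : IsOpen {p : (ι → ℝ) × (ι → ℝ) | δ < p.1 i₀ - p.2 i₀} :=
    isOpen_lt continuous_const
      (((continuous_apply i₀).comp continuous_fst).sub ((continuous_apply i₀).comp continuous_snd))
  have hz₀U : ((fun _ => 1 - c, fun _ => c) : (ι → ℝ) × (ι → ℝ)) ∈ U ×ˢ U :=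
    ⟨fun _ _ => ⟨by linarith, by linarith⟩, fun _ _ => ⟨hc₀, by linarith⟩⟩
  refine ⟨(fun _ => 1 - c, fun _ => c), ?_⟩
  filter_upwards [(hU.prod hU).mem_nhds hz₀U,
    hgap.mem_nhds (show δ < (1 - c) - c by simp only [c]; linarith)] with p hpU hpgap
  exact ⟨⟨pi_mono (fun _ _ => Ioo_subset_Icc_self) hpU.1,
    pi_mono (fun _ _ => Ioo_subset_Icc_self) hpU.2⟩, lt_of_lt_of_le hpgap (le_abs_self _)⟩

theorem stmt_3_general (D : ℕ) (hD : 1 ≤ D)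
    (cube : Set (Fin D → ℝ)) (hcube : cube = Set.univ.pi fun _ : Fin D => Set.Icc (0:ℝ) 1)
    (g₁ g₂ b₁ b₂ : (Fin D → ℝ) × (Fin D → ℝ) → ℝ)
    -- continuity of all kernels
    (hg₁c : ContinuousOn g₁ (cube ×ˢ cube)) (hg₂c : ContinuousOn g₂ (cube ×ˢ cube))
    (hb₁c : ContinuousOn b₁ (cube ×ˢ cube)) (hb₂c : ContinuousOn b₂ (cube ×ˢ cube))
    -- the global kernels are real analytic on [0,1]^{2D}
    (hg₁a : AnalyticOnNhd ℝ g₁ (cube ×ˢ cube)) (hg₂a : AnalyticOnNhd ℝ g₂ (cube ×ˢ cube))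
    -- the local kernels are δ-banded with bandwidth components in (0,1)
    (δ₁ δ₂ : Fin D → ℝ)
    (hδ₁ : ∀ d, 0 < δ₁ d ∧ δ₁ d < 1) (hδ₂ : ∀ d, 0 < δ₂ d ∧ δ₂ d < 1)
    (hb₁band : ∀ s₁ s₂ : Fin D → ℝ, (∃ d, δ₁ d ≤ |s₁ d - s₂ d|) → b₁ (s₁, s₂) = 0)
    (hb₂band : ∀ s₁ s₂ : Fin D → ℝ, (∃ d, δ₂ d ≤ |s₁ d - s₂ d|) → b₂ (s₁, s₂) = 0)
    -- operator equality G₁ + B₁ = G₂ + B₂ (action on continuous test functions)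
    (hop : ∀ f : (Fin D → ℝ) → ℝ, ContinuousOn f cube → ∀ s₁ ∈ cube,
      ∫ s₂ in cube, (g₁ (s₁, s₂) + b₁ (s₁, s₂)) * f s₂ =
        ∫ s₂ in cube, (g₂ (s₁, s₂) + b₂ (s₁, s₂)) * f s₂) :
    Set.EqOn g₁ g₂ (cube ×ˢ cube) ∧ Set.EqOn b₁ b₂ (cube ×ˢ cube) := by
  have hcube_compact : IsCompact cube := hcube ▸ isCompact_univ_pi fun _ => isCompact_Icc
  have hcube_convex : Convex ℝ cube := hcube ▸ convex_pi fun _ _ => convex_Icc 0 1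
  have hcube_closure : cube ⊆ closure (interior cube) :=
    hcube ▸ pi_Icc_subset_closure_interior fun _ => zero_lt_one
  have hsum : EqOn (g₁ + b₁) (g₂ + b₂) (cube ×ˢ cube) :=
    kernel_eqOn_of_forall_setIntegral_mul_eq hcube_compact hcube_closure (hg₁c.add hb₁c)
      (hg₂c.add hb₂c) hop
  obtain ⟨d₀⟩ : Nonempty (Fin D) := ⟨⟨0, hD⟩⟩
  obtain ⟨z₀, hz₀⟩ := exists_eventually_mem_unitCube_and_lt_abs_sub d₀
    ((hδ₁ d₀).1.le.trans (le_max_left _ (δ₂ d₀))) (max_lt (hδ₁ d₀).2 (hδ₂ d₀).2)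
  have hg : EqOn g₁ g₂ (cube ×ˢ cube) := by
    refine hg₁a.eqOn_of_preconnected_of_eventuallyEq hg₂a
      (hcube_convex.prod hcube_convex).isPreconnected (hcube ▸ hz₀.self_of_nhds.1) ?_
    filter_upwards [hz₀] with p ⟨hp, hgap⟩
    rw [← hcube] at hp
    have hb₁p := hb₁band p.1 p.2 ⟨d₀, (le_max_left _ _).trans hgap.le⟩
    have hb₂p := hb₂band p.1 p.2 ⟨d₀, (le_max_right _ _).trans hgap.le⟩
    simpa [hb₁p, hb₂p] using hsum hp
  refine ⟨hg, fun p hp => ?_⟩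
  simpa [hg hp] using hsum hp

/-- identifiability of the decomposition of a covariance operator into an
analytic-kernel (global) part plus a banded-kernel (local) part.  Operators on
L²([0,1]^D) with continuous kernels are determined by their kernels, so operator
equalities are expressed via the action of the integral operators on continuous test
functions, and the conclusions are the corresponding kernel equalities. -/
theorem stmt_3 (D : ℕ) (hD : 1 ≤ D)
    (cube : Set (Fin D → ℝ)) (hcube : cube = Set.univ.pi fun _ : Fin D => Set.Icc (0:ℝ) 1)
    (g₁ g₂ b₁ b₂ : (Fin D → ℝ) × (Fin D → ℝ) → ℝ)
    -- continuity of all kernels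
    (hg₁c : ContinuousOn g₁ (cube ×ˢ cube)) (hg₂c : ContinuousOn g₂ (cube ×ˢ cube))
    (hb₁c : ContinuousOn b₁ (cube ×ˢ cube)) (hb₂c : ContinuousOn b₂ (cube ×ˢ cube))
    -- covariance kernels: symmetric and positive semidefinite
    (hsym : ∀ k ∈ ({g₁, g₂, b₁, b₂} : Set ((Fin D → ℝ) × (Fin D → ℝ) → ℝ)),
      ∀ s₁ s₂, k (s₁, s₂) = k (s₂, s₁))
    (hpsd : ∀ k ∈ ({g₁, g₂, b₁, b₂} : Set ((Fin D → ℝ) × (Fin D → ℝ) → ℝ)),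
      ∀ f : (Fin D → ℝ) → ℝ, ContinuousOn f cube →
        0 ≤ ∫ s₁ in cube, ∫ s₂ in cube, k (s₁, s₂) * f s₁ * f s₂)
    -- the global kernels are real analytic on [0,1]^{2D}
    (hg₁a : AnalyticOnNhd ℝ g₁ (cube ×ˢ cube)) (hg₂a : AnalyticOnNhd ℝ g₂ (cube ×ˢ cube))
    -- the local kernels are δ-banded with bandwidth components in (0,1)
    (δ₁ δ₂ : Fin D → ℝ)
    (hδ₁ : ∀ d, 0 < δ₁ d ∧ δ₁ d < 1) (hδ₂ : ∀ d, 0 < δ₂ d ∧ δ₂ d < 1)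
    (hb₁band : ∀ s₁ s₂ : Fin D → ℝ, (∃ d, δ₁ d ≤ |s₁ d - s₂ d|) → b₁ (s₁, s₂) = 0)
    (hb₂band : ∀ s₁ s₂ : Fin D → ℝ, (∃ d, δ₂ d ≤ |s₁ d - s₂ d|) → b₂ (s₁, s₂) = 0)
    -- operator equality G₁ + B₁ = G₂ + B₂ (action on continuous test functions)
    (hop : ∀ f : (Fin D → ℝ) → ℝ, ContinuousOn f cube → ∀ s₁ ∈ cube,
      ∫ s₂ in cube, (g₁ (s₁, s₂) + b₁ (s₁, s₂)) * f s₂ =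
        ∫ s₂ in cube, (g₂ (s₁, s₂) + b₂ (s₁, s₂)) * f s₂) :
    Set.EqOn g₁ g₂ (cube ×ˢ cube) ∧ Set.EqOn b₁ b₂ (cube ×ˢ cube) :=
  stmt_3_general D hD cube hcube g₁ g₂ b₁ b₂ hg₁c hg₂c hb₁c hb₂c hg₁a hg₂a δ₁ δ₂ hδ₁ hδ₂ hb₁band
    hb₂band hop
end

section
/- Let C = G + B where G is an M × M symmetric positive semidefinite matrix of rank K all of whose K × K minors are nonzero, and B is an M × M matrix vanishing on the off-band index set Ω = {(i,j) : |i − j| > ⌈δM⌉} with δ < 1/4 and K ≤ ⌊M/4 − 1⌋. Then G is the unique solution of: minimize rank(θ) over M × M matrices θ subject to θ_{ij} = C_{ij} for all (i,j) with |i − j| > ⌈M/4⌉. -/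
/-!
Off the band `|i - j| > ⌈M/4⌉` the perturbation `B` vanishes, so every feasible `θ` agrees
with `G` there. The top-right `K × K` block is off the band, and it is a nonsingular minor
of `G`, so `rank θ ≥ K`. If `rank θ = K`, fill the band in diagonal by diagonal from the
outside: an entry with `|i - j| = t` is the corner of a `(K + 1) × (K + 1)` submatrix whose
other entries lie at distance `> t`, hence already agree. Both such minors vanish by the rank
bound, and their difference is the difference of the corner entries times a `K × K` minor
of `G`, which is nonzero. The inequality `2⌈M/4⌉ + 2K + 1 ≤ M` leaves room for these
submatrices.
-/

open Matrix Function

namespace Matrix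

variable {F : Type*} [Field F] {m n : Type*} [Fintype n]

theorem le_rank_of_det_submatrix_ne_zero {k : ℕ} (A : Matrix m n F) {f : Fin k → m}
    {g : Fin k → n} (h : (A.submatrix f g).det ≠ 0) : k ≤ A.rank := by
  have hunit : IsUnit (A.submatrix f g) := (isUnit_iff_isUnit_det _).mpr h.isUnit
  simpa [rank_of_isUnit _ hunit] using rank_submatrix_le A f g

theorem det_submatrix_eq_zero_of_rank_lt {k : ℕ} (A : Matrix m n F) (hA : A.rank < k)
    (f : Fin k → m) (g : Fin k → n) : (A.submatrix f g).det = 0 := by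
  by_contra h
  exact (le_rank_of_det_submatrix_ne_zero A h).not_gt hA

/-- Expanding both determinants along the first row, all cofactors but the corner one coincide. -/
theorem det_sub_det_of_eq_off_corner {R : Type*} [CommRing R] {k : ℕ}
    (A B : Matrix (Fin (k + 1)) (Fin (k + 1)) R) (h : ∀ r c, (r ≠ 0 ∨ c ≠ 0) → A r c = B r c) :
    A.det - B.det = (A 0 0 - B 0 0) * (A.submatrix Fin.succ Fin.succ).det := by
  have hminor : ∀ c : Fin (k + 1),
      B.submatrix Fin.succ c.succAbove = A.submatrix Fin.succ c.succAbove :=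
    fun c => by ext r c'; exact (h _ _ (Or.inl (Fin.succ_ne_zero r))).symm
  rw [det_succ_row_zero A, det_succ_row_zero B, ← Finset.sum_sub_distrib,
    Finset.sum_eq_single (0 : Fin (k + 1))]
  · rw [hminor 0, Fin.succAbove_zero, Fin.val_zero, pow_zero]
    ring
  · intro c _ hc
    rw [hminor c, h 0 c (Or.inr hc)]
    ring
  · exact fun h0 => absurd (Finset.mem_univ _) h0

/-- Both bordered `(k + 1) × (k + 1)` minors vanish, and by `det_sub_det_of_eq_off_corner` they
differ by `(θ i j - G i j)` times the nonsingular block's determinant. -/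
theorem apply_eq_of_rank_le_of_eq_on_border {k : ℕ} {θ G : Matrix m n F} (hθ : θ.rank ≤ k)
    (hG : G.rank ≤ k) {i : m} {j : n} {rows : Fin k → m} {cols : Fin k → n}
    (hdet : (G.submatrix rows cols).det ≠ 0)
    (hblock : ∀ a b, θ (rows a) (cols b) = G (rows a) (cols b))
    (hrow : ∀ b, θ i (cols b) = G i (cols b)) (hcol : ∀ a, θ (rows a) j = G (rows a) j) :
    θ i j = G i j := by
  set A := θ.submatrix (Fin.cons i rows) (Fin.cons j cols)
  set B := G.submatrix (Fin.cons i rows) (Fin.cons j cols)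
  have hoff : ∀ r c, (r ≠ 0 ∨ c ≠ 0) → A r c = B r c := by
    intro r c hrc
    cases r using Fin.cases <;> cases c using Fin.cases <;> simp_all [A, B]
  have hcorner : A.submatrix Fin.succ Fin.succ = G.submatrix rows cols := by
    ext a b
    simp [A, hblock]
  have key := det_sub_det_of_eq_off_corner A B hoff
  rw [det_submatrix_eq_zero_of_rank_lt θ (Nat.lt_succ_of_le hθ),
    det_submatrix_eq_zero_of_rank_lt G (Nat.lt_succ_of_le hG), sub_zero, hcorner] at key
  simpa [A, B, sub_eq_zero] using (mul_eq_zero.mp key.symm).resolve_right hdet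

end Matrix

section Band

variable {M K : ℕ} {t : ℤ}

def OffBand (t : ℤ) (i j : Fin M) : Prop := t < |(i : ℤ) - j|

theorem offBand_iff {i j : Fin M} : OffBand t i j ↔ (i : ℤ) + t < j ∨ (j : ℤ) + t < i := by
  rw [OffBand, lt_abs]
  omega

theorem OffBand.symm {i j : Fin M} (h : OffBand t i j) : OffBand t j i := by
  rw [offBand_iff] at *
  omega

theorem offBand_rev_rev {i j : Fin M} : OffBand t i.rev j.rev ↔ OffBand t j i := by
  simp only [offBand_iff, Fin.val_rev]
  omega

structure OffBandFrame (K : ℕ) (t : ℤ) (i j : Fin M) where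
  rows : Fin K → Fin M
  cols : Fin K → Fin M
  rows_injective : Injective rows
  cols_injective : Injective cols
  offBand_row : ∀ a, OffBand t (rows a) j
  offBand_col : ∀ b, OffBand t i (cols b)
  offBand_block : ∀ a b, OffBand t (rows a) (cols b)

namespace OffBandFrame

def swap {i j : Fin M} (fr : OffBandFrame K t j i) : OffBandFrame K t i j where
  rows := fr.cols
  cols := fr.rows
  rows_injective := fr.cols_injective
  cols_injective := fr.rows_injective
  offBand_row b := (fr.offBand_col b).symm
  offBand_col a := (fr.offBand_row a).symm
  offBand_block a b := (fr.offBand_block b a).symm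

def rev {i j : Fin M} (fr : OffBandFrame K t j.rev i.rev) : OffBandFrame K t i j where
  rows a := (fr.cols a).rev
  cols b := (fr.rows b).rev
  rows_injective := Fin.rev_injective.comp fr.cols_injective
  cols_injective := Fin.rev_injective.comp fr.rows_injective
  offBand_row b := by simpa only [Fin.rev_rev] using offBand_rev_rev.mpr (fr.offBand_col b)
  offBand_col a := by simpa only [Fin.rev_rev] using offBand_rev_rev.mpr (fr.offBand_row a)
  offBand_block a b := offBand_rev_rev.mpr (fr.offBand_block b a)

def ofAddLt {i j : Fin M} (hij : (i : ℤ) + t = j) (hj : (j : ℕ) + K < M)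
    (hM : 2 * t + 2 * K + 1 ≤ M) : OffBandFrame K t i j where
  rows a := ⟨if (a : ℕ) < i then a else M - K + a, by split_ifs <;> omega⟩
  cols b := ⟨j + 1 + b, by omega⟩
  rows_injective a a' h := by
    simp only [Fin.mk.injEq] at h
    ext
    split_ifs at h <;> omega
  cols_injective b b' h := by
    simp only [Fin.mk.injEq] at h
    ext
    omega
  offBand_row a := by
    simp only [offBand_iff]
    split_ifs <;> omega
  offBand_col b := by
    simp only [offBand_iff]
    omega
  offBand_block a b := by
    simp only [offBand_iff]
    split_ifs <;> omega

end OffBandFrame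

theorem nonempty_offBandFrame_of_add_eq (ht : 0 ≤ t) (hM : 2 * t + 2 * K + 1 ≤ M)
    {i j : Fin M} (hij : (i : ℤ) + t = j) : Nonempty (OffBandFrame K t i j) := by
  by_cases hj : (j : ℕ) + K < M
  · exact ⟨OffBandFrame.ofAddLt hij hj hM⟩
  -- Near the right edge, reflect in the antidiagonal: then `K ≤ i` keeps the image off that edge.
  · exact ⟨(OffBandFrame.ofAddLt (by simp only [Fin.val_rev]; omega)
      (by simp only [Fin.val_rev]; omega) hM).rev⟩

theorem nonempty_offBandFrame (hM : 2 * t + 2 * K + 1 ≤ M) {i j : Fin M}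
    (hij : |(i : ℤ) - j| = t) : Nonempty (OffBandFrame K t i j) := by
  have ht : 0 ≤ t := hij ▸ abs_nonneg _
  rcases (abs_eq ht).mp hij with h | h
  · exact ⟨(nonempty_offBandFrame_of_add_eq ht hM (i := j) (j := i) (by omega)).some.swap⟩
  · exact nonempty_offBandFrame_of_add_eq ht hM (by omega)

theorem exists_offBand_block (ht : 0 ≤ t) (hM : t + 2 * K < M) :
    ∃ rows cols : Fin K → Fin M,
      Injective rows ∧ Injective cols ∧ ∀ a b, OffBand t (rows a) (cols b) :=
  ⟨fun a => ⟨a, by omega⟩, fun b => ⟨M - K + b, by omega⟩,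
    fun a a' h => Fin.ext (by simpa using h),
    fun b b' h => by ext; simp only [Fin.mk.injEq] at h; omega,
    fun a b => by simp only [offBand_iff]; omega⟩

end Band

section Completion

variable {F : Type*} [Field F] {M K : ℕ} {t : ℤ} {θ G : Matrix (Fin M) (Fin M) F}

theorem le_rank_of_eq_offBand
    (hminors : ∀ f g : Fin K → Fin M, Injective f → Injective g → (G.submatrix f g).det ≠ 0)
    (ht : 0 ≤ t) (hM : t + 2 * K < M) (h : ∀ i j, OffBand t i j → θ i j = G i j) :
    K ≤ θ.rank := by
  obtain ⟨rows, cols, hrows, hcols, hblock⟩ := exists_offBand_block ht hM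
  have hsub : θ.submatrix rows cols = G.submatrix rows cols := by
    ext a b
    exact h _ _ (hblock a b)
  exact le_rank_of_det_submatrix_ne_zero θ (hsub ▸ hminors rows cols hrows hcols)

theorem eq_offBand_sub_one (hθ : θ.rank ≤ K) (hG : G.rank ≤ K)
    (hminors : ∀ f g : Fin K → Fin M, Injective f → Injective g → (G.submatrix f g).det ≠ 0)
    (hM : 2 * t + 2 * K + 1 ≤ M) (h : ∀ i j, OffBand t i j → θ i j = G i j) :
    ∀ i j, OffBand (t - 1) i j → θ i j = G i j := by
  intro i j hij
  by_cases hfar : OffBand t i j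
  · exact h i j hfar
  have hbd : |(i : ℤ) - j| = t := by
    rw [OffBand, not_lt] at hfar
    rw [OffBand] at hij
    omega
  obtain ⟨fr⟩ := nonempty_offBandFrame (K := K) hM hbd
  exact apply_eq_of_rank_le_of_eq_on_border hθ hG
    (hminors _ _ fr.rows_injective fr.cols_injective)
    (fun a b => h _ _ (fr.offBand_block a b)) (fun b => h _ _ (fr.offBand_col b))
    (fun a => h _ _ (fr.offBand_row a))

theorem eq_of_eq_offBand (hθ : θ.rank ≤ K) (hG : G.rank ≤ K)
    (hminors : ∀ f g : Fin K → Fin M, Injective f → Injective g → (G.submatrix f g).det ≠ 0)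
    (hM : 2 * t + 2 * K + 1 ≤ M) (h : ∀ i j, OffBand t i j → θ i j = G i j) : θ = G := by
  have hshrink : ∀ n : ℕ, ∀ i j, OffBand (t - n) i j → θ i j = G i j := by
    intro n
    induction n with
    | zero => simpa using h
    | succ n ih =>
      simpa [sub_sub] using eq_offBand_sub_one hθ hG hminors (by omega) ih
  ext i j
  refine hshrink (t.toNat + 1) i j ?_
  rw [OffBand]
  have := abs_nonneg ((i : ℤ) - j)
  omega

end Completion

theorem two_mul_ceil_add_le {M K : ℕ} (hK : (K : ℝ) ≤ ⌊(M : ℝ) / 4 - 1⌋) :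
    2 * ⌈(M : ℝ) / 4⌉ + 2 * K + 1 ≤ M := by
  have hKM : 4 * K + 4 ≤ M := by
    have : (K : ℝ) ≤ M / 4 - 1 := hK.trans (Int.floor_le _)
    exact_mod_cast (by linarith : (4 * K + 4 : ℝ) ≤ M)
  have hceil : 4 * ⌈(M : ℝ) / 4⌉ < M + 4 := by
    have := Int.ceil_lt_add_one ((M : ℝ) / 4)
    exact_mod_cast (by push_cast; linarith : ((4 * ⌈(M : ℝ) / 4⌉ : ℤ) : ℝ) < M + 4)
  omega

theorem stmt_11_general (M K : ℕ) (δ : ℝ) (hδ : δ < 1 / 4)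
    (hK : (K : ℝ) ≤ ⌊(M : ℝ) / 4 - 1⌋)
    (G B C : Matrix (Fin M) (Fin M) ℝ) (hC : C = G + B)
    (hGrank : G.rank = K)
    (hminors : ∀ f g : Fin K → Fin M, Function.Injective f → Function.Injective g →
      (G.submatrix f g).det ≠ 0)
    (hBband : ∀ i j : Fin M, (⌈δ * (M : ℝ)⌉ : ℤ) < |(i : ℤ) - (j : ℤ)| → B i j = 0) :
    (∀ i j : Fin M, (⌈(M : ℝ) / 4⌉ : ℤ) < |(i : ℤ) - (j : ℤ)| → G i j = C i j) ∧
    (∀ θ : Matrix (Fin M) (Fin M) ℝ,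
      (∀ i j : Fin M, (⌈(M : ℝ) / 4⌉ : ℤ) < |(i : ℤ) - (j : ℤ)| → θ i j = C i j) →
        K ≤ θ.rank ∧ (θ.rank = K → θ = G)) := by
  have hM := two_mul_ceil_add_le hK
  have hb : 0 ≤ ⌈(M : ℝ) / 4⌉ := Int.ceil_nonneg (by positivity)
  have hδb : ⌈δ * M⌉ ≤ ⌈(M : ℝ) / 4⌉ :=
    Int.ceil_le_ceil (by nlinarith [(Nat.cast_nonneg M : (0 : ℝ) ≤ M)])
  have hGC : ∀ i j : Fin M, ⌈(M : ℝ) / 4⌉ < |(i : ℤ) - j| → G i j = C i j := fun i j hij => by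
    simp [hC, hBband i j (hδb.trans_lt hij)]
  refine ⟨hGC, fun θ hθC => ?_⟩
  have hθG : ∀ i j, OffBand ⌈(M : ℝ) / 4⌉ i j → θ i j = G i j :=
    fun i j hij => (hθC i j hij).trans (hGC i j hij).symm
  exact ⟨le_rank_of_eq_offBand hminors hb (by omega) hθG, fun hθrank =>
    eq_of_eq_offBand hθrank.le hGrank.le hminors hM hθG⟩

/-- Let C = G + B with G symmetric PSD of rank K, all of whose K × K
minors are nonzero, and B vanishing off the band |i − j| > ⌈δM⌉, where δ < 1/4 and
K ≤ ⌊M/4 − 1⌋.  Then G is the unique solution of the rank-minimization problem: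
minimize rank(θ) subject to θ agreeing with C off the band |i − j| > ⌈M/4⌉. -/
theorem stmt_11 (M K : ℕ) (δ : ℝ) (hδ0 : 0 ≤ δ) (hδ : δ < 1 / 4)
    (hK : (K : ℝ) ≤ ⌊(M : ℝ) / 4 - 1⌋)
    (G B C : Matrix (Fin M) (Fin M) ℝ) (hC : C = G + B)
    (hGpsd : G.PosSemidef) (hGrank : G.rank = K)
    (hminors : ∀ f g : Fin K → Fin M, Function.Injective f → Function.Injective g →
      (G.submatrix f g).det ≠ 0)
    (hBband : ∀ i j : Fin M, (⌈δ * (M : ℝ)⌉ : ℤ) < |(i : ℤ) - (j : ℤ)| → B i j = 0) :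
    (∀ i j : Fin M, (⌈(M : ℝ) / 4⌉ : ℤ) < |(i : ℤ) - (j : ℤ)| → G i j = C i j) ∧
    (∀ θ : Matrix (Fin M) (Fin M) ℝ,
      (∀ i j : Fin M, (⌈(M : ℝ) / 4⌉ : ℤ) < |(i : ℤ) - (j : ℤ)| → θ i j = C i j) →
        K ≤ θ.rank ∧ (θ.rank = K → θ = G)) :=
  stmt_11_general M K δ hδ hK G B C hC hGrank hminors hBband
end
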